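/- Suppose F = f + Ψ where f : ℝⁿ → ℝ is convex and L-smooth (L > 0) and Ψ : ℝⁿ → ℝ ∪ {+∞} is proper, closed and convex, and suppose F attains its minimum at x*. Let z₀, y₁ ∈ ℝⁿ, and for k ≥ 1 define z̄_{k−1} = z_{k−1} − G_{1/L}(z_{k−1})/L and γ_k = (k+1)/(2L); suppose z_k lies on the affine line through z̄_{k−1} and y_k and satisfies ⟨G_{1/L}(z_k), y_k − z_k⟩ ≥ 0 and −⟨G_{1/L}(z_k), z̄_{k−1} − z_k⟩ ≤ 0; and set y_{k+1} = y_k − γ_k G_{1/L}(z_k). Then for all k ≥ 1, ‖y_{k+1} − x*‖² + (k+1)(k+2)(F(z̄_k) − F(x*))/(2L) ≤ ‖y_k − x*‖² + k(k+1)(F(z̄_{k−1}) − F(x*))/(2L). -/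

import Mathlib

/-! The key estimate is the prox-gradient inequality
`F x⁺ ≤ F u + ⟪G x, x - u⟫ - ‖G x‖² / (2L)` for `x⁺ = x - G x / L` and every `u`: add the descent
lemma for `f`, the first-order convexity inequality for `f`, and the subgradient inequality of `Ψ`
at the prox point. Apply it at `x = z_k` with `u = x*` and with `u = z̄_{k-1}`; the line-search sign
conditions turn the inner products into `⟪G, y_k - x*⟫` and a nonpositive term. Weighting the two
inequalities by `(k+1)/L` and `k(k+1)/(2L)` and expanding `‖y_{k+1} - x*‖²` leaves the slack
`(k+1)‖G‖²/(4L²) ≥ 0`.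

Both first-order inequalities come from comparing convexity along a segment with a quadratic
bound, which gives `l * A ≤ l² * C` for all `l ∈ (0, 1)` and hence `A ≤ 0`. -/

open scoped RealInnerProductSpace
open Filter Set Topology

lemma nonpos_of_forall_mul_le_sq_mul {A C : ℝ} (h : ∀ l ∈ Ioo (0 : ℝ) 1, l * A ≤ l ^ 2 * C) :
    A ≤ 0 := by
  have hlim : Tendsto (fun l : ℝ => l * C) (𝓝[>] 0) (𝓝 0) := by
    simpa using ((continuous_mul_const C).tendsto 0).mono_left nhdsWithin_le_nhds
  refine ge_of_tendsto hlim ?_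
  filter_upwards [Ioo_mem_nhdsGT (zero_lt_one' ℝ)] with l hl
  exact le_of_mul_le_mul_left (by rw [← mul_assoc, ← sq]; exact h l hl) hl.1

variable {E : Type*} [NormedAddCommGroup E]

def IsProxPoint (Ψ : E → EReal) (t : ℝ) (v p : E) : Prop :=
  ∀ z, Ψ p + ((‖v - p‖ ^ 2 / (2 * t) : ℝ) : EReal) ≤ Ψ z + ((‖v - z‖ ^ 2 / (2 * t) : ℝ) : EReal)

lemma IsProxPoint.exists_coe {Ψ : E → EReal} {t : ℝ} {v p x₀ : E} (hp : IsProxPoint Ψ t v p)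
    (hbot : Ψ p ≠ ⊥) (hx₀ : Ψ x₀ ≠ ⊤) : ∃ s : ℝ, Ψ p = s := by
  refine ⟨_, (EReal.coe_toReal (fun htop => ?_) hbot).symm⟩
  have h := hp x₀
  rw [htop, EReal.top_add_coe, top_le_iff] at h
  exact (EReal.add_lt_top hx₀ (EReal.coe_ne_top _)).ne h

variable [InnerProductSpace ℝ E]

lemma ConvexOn.add_inner_sub_le_of_quadratic_lower_bound {f : E → ℝ}
    (hf : ConvexOn ℝ univ f) {x g : E} {C : ℝ}
    (hquad : ∀ w, f x + ⟪g, w - x⟫ - C * ‖w - x‖ ^ 2 ≤ f w) (u : E) :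
    f x + ⟪g, u - x⟫ ≤ f u := by
  suffices f x + ⟪g, u - x⟫ - f u ≤ 0 by linarith
  refine nonpos_of_forall_mul_le_sq_mul (C := C * ‖u - x‖ ^ 2) fun l hl => ?_
  have hconv := hf.2 (mem_univ u) (mem_univ x) hl.1.le (sub_nonneg.2 hl.2.le) (add_sub_cancel l 1)
  have hlow := hquad (l • u + (1 - l) • x)
  rw [show l • u + (1 - l) • x - x = l • (u - x) by module, real_inner_smul_right, norm_smul,
    Real.norm_of_nonneg hl.1.le, mul_pow] at hlow
  simp only [smul_eq_mul] at hconv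
  linarith

lemma IsProxPoint.add_inner_div_le {Ψ : E → EReal}
    (hΨ : ∀ x y : E, ∀ a b : ℝ, 0 ≤ a → 0 ≤ b → a + b = 1 →
      Ψ (a • x + b • y) ≤ (a : EReal) * Ψ x + (b : EReal) * Ψ y)
    {t : ℝ} (ht : 0 < t) {v p u : E} {s r : ℝ} (hp : IsProxPoint Ψ t v p) (hps : Ψ p = s)
    (hur : Ψ u = r) :
    s + ⟪v - p, u - p⟫ / t ≤ r := by
  suffices s + ⟪v - p, u - p⟫ / t - r ≤ 0 by linarith
  refine nonpos_of_forall_mul_le_sq_mul (C := ‖u - p‖ ^ 2 / (2 * t)) fun l hl => ?_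
  have hcvx := hΨ p u (1 - l) l (sub_nonneg.2 hl.2.le) hl.1.le (sub_add_cancel 1 l)
  rw [hps, hur, ← EReal.coe_mul, ← EReal.coe_mul, ← EReal.coe_add] at hcvx
  have hmin := hp ((1 - l) • p + l • u)
  rw [hps] at hmin
  have hreal : s + ‖v - p‖ ^ 2 / (2 * t)
      ≤ (1 - l) * s + l * r + ‖v - ((1 - l) • p + l • u)‖ ^ 2 / (2 * t) := by
    exact_mod_cast hmin.trans (add_le_add_left hcvx _)
  have hexp : ‖v - ((1 - l) • p + l • u)‖ ^ 2
      = ‖v - p‖ ^ 2 - 2 * (l * ⟪v - p, u - p⟫) + l ^ 2 * ‖u - p‖ ^ 2 := by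
    rw [show v - ((1 - l) • p + l • u) = (v - p) - l • (u - p) by module, norm_sub_sq_real,
      real_inner_smul_right, norm_smul, Real.norm_of_nonneg hl.1.le, mul_pow]
  have hsplit : (‖v - p‖ ^ 2 - 2 * (l * ⟪v - p, u - p⟫) + l ^ 2 * ‖u - p‖ ^ 2) / (2 * t)
      = ‖v - p‖ ^ 2 / (2 * t) - l * (⟪v - p, u - p⟫ / t) + l ^ 2 * (‖u - p‖ ^ 2 / (2 * t)) := by
    field_simp
  rw [hexp, hsplit] at hreal
  linarith

lemma IsProxPoint.proxGrad_le {f : E → ℝ} {f' : E → E} {L : ℝ} (hL : 0 < L)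
    (hf : ConvexOn ℝ univ f)
    (hsmooth : ∀ x y : E, |f x - f y - ⟪f' y, x - y⟫| ≤ L / 2 * ‖x - y‖ ^ 2)
    {Ψ : E → EReal}
    (hΨ : ∀ x y : E, ∀ a b : ℝ, 0 ≤ a → 0 ≤ b → a + b = 1 →
      Ψ (a • x + b • y) ≤ (a : EReal) * Ψ x + (b : EReal) * Ψ y)
    {x g u : E} {s r : ℝ} (hp : IsProxPoint Ψ (1 / L) (x - (1 / L) • f' x) (x - (1 / L) • g))
    (hps : Ψ (x - (1 / L) • g) = s) (hur : Ψ u = r) :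
    f (x - (1 / L) • g) + s ≤ f u + r + ⟪g, x - u⟫ - ‖g‖ ^ 2 / (2 * L) := by
  have hsub := hf.add_inner_sub_le_of_quadratic_lower_bound (x := x) (g := f' x) (C := L / 2)
    (fun w => by linarith [(abs_le.1 (hsmooth w x)).1]) u
  have hupper := (abs_le.1 (hsmooth (x - (1 / L) • g) x)).2
  rw [show x - (1 / L) • g - x = -((1 / L) • g) by abel, inner_neg_right, real_inner_smul_right,
    norm_neg, norm_smul, Real.norm_of_nonneg (by positivity), mul_pow] at hupper
  have hprox := hp.add_inner_div_le hΨ (by positivity) hps hur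
  have hprox_inner : ⟪x - (1 / L) • f' x - (x - (1 / L) • g), u - (x - (1 / L) • g)⟫ / (1 / L)
      = ⟪g, u - x⟫ + ‖g‖ ^ 2 / L - ⟪f' x, u - x⟫ - ⟪f' x, g⟫ / L := by
    rw [show x - (1 / L) • f' x - (x - (1 / L) • g) = (1 / L) • (g - f' x) by module,
      show u - (x - (1 / L) • g) = (u - x) + (1 / L) • g by module, real_inner_smul_left,
      inner_add_right, real_inner_smul_right, inner_sub_left, inner_sub_left,
      real_inner_self_eq_norm_sq]
    field_simp
    ring
  rw [hprox_inner] at hprox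
  have hflip : ⟪g, x - u⟫ = -⟪g, u - x⟫ := by rw [← inner_neg_right, neg_sub]
  have hL2 : L / 2 * ((1 / L) ^ 2 * ‖g‖ ^ 2) = ‖g‖ ^ 2 / (2 * L) := by field_simp
  have hL1 : ‖g‖ ^ 2 / L = 2 * (‖g‖ ^ 2 / (2 * L)) := by field_simp
  have hL0 : 1 / L * ⟪f' x, g⟫ = ⟪f' x, g⟫ / L := one_div_mul_eq_div L _
  linarith

lemma geometricDescent_potential_le {y z zprev xstar g : E} {L k Fb Fp Fs : ℝ} (hL : 0 < L)
    (hk : 0 ≤ k)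
    (hstar : Fb ≤ Fs + ⟪g, z - xstar⟫ - ‖g‖ ^ 2 / (2 * L))
    (hprev : Fb ≤ Fp + ⟪g, z - zprev⟫ - ‖g‖ ^ 2 / (2 * L))
    (hsign_y : 0 ≤ ⟪g, y - z⟫) (hsign_prev : -⟪g, zprev - z⟫ ≤ 0) :
    ‖y - ((k + 1) / (2 * L)) • g - xstar‖ ^ 2 + (k + 1) * (k + 2) / (2 * L) * (Fb - Fs)
      ≤ ‖y - xstar‖ ^ 2 + k * (k + 1) / (2 * L) * (Fp - Fs) := by
  have hsplit : ⟪g, z - xstar⟫ = ⟪g, y - xstar⟫ - ⟪g, y - z⟫ := by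
    rw [← inner_sub_right, sub_sub_sub_cancel_left]
  have hflip : ⟪g, z - zprev⟫ = -⟪g, zprev - z⟫ := by rw [← inner_neg_right, neg_sub]
  have hexp : ‖y - ((k + 1) / (2 * L)) • g - xstar‖ ^ 2 = ‖y - xstar‖ ^ 2
      - 2 * ((k + 1) / (2 * L)) * ⟪g, y - xstar⟫ + ((k + 1) / (2 * L)) ^ 2 * ‖g‖ ^ 2 := by
    rw [sub_right_comm, norm_sub_sq_real, real_inner_smul_right, real_inner_comm, norm_smul,
      Real.norm_of_nonneg (by positivity), mul_pow]
    ring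
  rw [hexp]
  have h₁ := mul_le_mul_of_nonneg_left (show Fb ≤ Fs + ⟪g, y - xstar⟫ - ‖g‖ ^ 2 / (2 * L) by
    linarith) (show 0 ≤ (k + 1) / L by positivity)
  have h₂ := mul_le_mul_of_nonneg_left (show Fb ≤ Fp - ‖g‖ ^ 2 / (2 * L) by linarith)
    (show 0 ≤ k * (k + 1) / (2 * L) by positivity)
  have h₃ : 0 ≤ (k + 1) * ‖g‖ ^ 2 / (4 * L ^ 2) := by positivity
  linear_combination h₁ + h₂ + h₃

theorem geometric_descent_convex_potential_general {n : ℕ} (L : ℝ) (hL : 0 < L)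
    (f : EuclideanSpace ℝ (Fin n) → ℝ)
    (f' : EuclideanSpace ℝ (Fin n) → EuclideanSpace ℝ (Fin n))
    (hfconvex : ConvexOn ℝ Set.univ f)
    (hsmooth : ∀ x y : EuclideanSpace ℝ (Fin n),
      |f x - f y - ⟪f' y, x - y⟫| ≤ L / 2 * ‖x - y‖ ^ 2)
    (Ψ : EuclideanSpace ℝ (Fin n) → EReal)
    (hproper : (∀ x, Ψ x ≠ ⊥) ∧ (∃ x, Ψ x ≠ ⊤))
    (hconvex : ∀ x y : EuclideanSpace ℝ (Fin n), ∀ a b : ℝ, 0 ≤ a → 0 ≤ b → a + b = 1 →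
      Ψ (a • x + b • y) ≤ (a : EReal) * Ψ x + (b : EReal) * Ψ y)
    (prox : ℝ → EuclideanSpace ℝ (Fin n) → EuclideanSpace ℝ (Fin n))
    (hprox : ∀ t : ℝ, 0 < t → ∀ x z : EuclideanSpace ℝ (Fin n),
      Ψ (prox t x) + ((‖x - prox t x‖ ^ 2 / (2 * t) : ℝ) : EReal)
        ≤ Ψ z + ((‖x - z‖ ^ 2 / (2 * t) : ℝ) : EReal))
    (F : EuclideanSpace ℝ (Fin n) → EReal)
    (hF : ∀ x, F x = (f x : EReal) + Ψ x)
    (G : ℝ → EuclideanSpace ℝ (Fin n) → EuclideanSpace ℝ (Fin n))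
    (hG : ∀ t x, G t x = t⁻¹ • (x - prox t (x - t • f' x)))
    (xstar : EuclideanSpace ℝ (Fin n)) (hxstar : ∀ w, F xstar ≤ F w)
    (z y : ℕ → EuclideanSpace ℝ (Fin n))
    (hzsign : ∀ k : ℕ, 1 ≤ k →
      0 ≤ ⟪G (1 / L) (z k), y k - z k⟫ ∧
      -⟪G (1 / L) (z k), (z (k - 1) - (1 / L) • G (1 / L) (z (k - 1))) - z k⟫ ≤ 0)
    (hyupd : ∀ k : ℕ, 1 ≤ k →
      y (k + 1) = y k - (((k : ℝ) + 1) / (2 * L)) • G (1 / L) (z k)) :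
    ∀ k : ℕ, 1 ≤ k →
      ((‖y (k + 1) - xstar‖ ^ 2 : ℝ) : EReal)
          + ((((k : ℝ) + 1) * ((k : ℝ) + 2) / (2 * L) : ℝ) : EReal)
            * (F (z k - (1 / L) • G (1 / L) (z k)) - F xstar)
        ≤ ((‖y k - xstar‖ ^ 2 : ℝ) : EReal)
          + (((k : ℝ) * ((k : ℝ) + 1) / (2 * L) : ℝ) : EReal)
            * (F (z (k - 1) - (1 / L) • G (1 / L) (z (k - 1))) - F xstar) := by
  intro k hk
  have hproxPoint (x) :
      IsProxPoint Ψ (1 / L) (x - (1 / L) • f' x) (x - (1 / L) • G (1 / L) x) := by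
    intro w
    have hbar : prox (1 / L) (x - (1 / L) • f' x) = x - (1 / L) • G (1 / L) x := by
      rw [hG, smul_smul, mul_inv_cancel₀ (by positivity), one_smul, sub_sub_cancel]
    simpa only [hbar] using hprox (1 / L) (by positivity) (x - (1 / L) • f' x) w
  obtain ⟨x₀, hx₀⟩ := hproper.2
  obtain ⟨s₁, hs₁⟩ := (hproxPoint (z k)).exists_coe (hproper.1 _) hx₀
  obtain ⟨s₀, hs₀⟩ := (hproxPoint (z (k - 1))).exists_coe (hproper.1 _) hx₀
  obtain ⟨sstar, hsstar⟩ : ∃ s : ℝ, Ψ xstar = s := by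
    refine ⟨_, (EReal.coe_toReal (fun htop => ?_) (hproper.1 _)).symm⟩
    have h := hxstar (z k - (1 / L) • G (1 / L) (z k))
    rw [hF, hF, htop, hs₁, EReal.coe_add_top, top_le_iff] at h
    exact (EReal.add_lt_top (EReal.coe_ne_top _) (EReal.coe_ne_top _)).ne h
  have key := geometricDescent_potential_le hL k.cast_nonneg
    ((hproxPoint (z k)).proxGrad_le hL hfconvex hsmooth hconvex hs₁ hsstar)
    ((hproxPoint (z k)).proxGrad_le hL hfconvex hsmooth hconvex hs₁ hs₀) (hzsign k hk).1
    (hzsign k hk).2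
  rw [hyupd k hk, hF, hF, hF, hs₁, hs₀, hsstar]
  exact_mod_cast key

/-- potential decrease for geometric descent in the non-strongly
convex composite setting. -/
theorem geometric_descent_convex_potential {n : ℕ} (L : ℝ) (hL : 0 < L)
    (f : EuclideanSpace ℝ (Fin n) → ℝ)
    (f' : EuclideanSpace ℝ (Fin n) → EuclideanSpace ℝ (Fin n))
    (hdiff : ∀ x, HasGradientAt f (f' x) x)
    (hfconvex : ConvexOn ℝ Set.univ f)
    (hsmooth : ∀ x y : EuclideanSpace ℝ (Fin n),
      |f x - f y - ⟪f' y, x - y⟫| ≤ L / 2 * ‖x - y‖ ^ 2)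
    (Ψ : EuclideanSpace ℝ (Fin n) → EReal)
    (hproper : (∀ x, Ψ x ≠ ⊥) ∧ (∃ x, Ψ x ≠ ⊤))
    (hclosed : LowerSemicontinuous Ψ)
    (hconvex : ∀ x y : EuclideanSpace ℝ (Fin n), ∀ a b : ℝ, 0 ≤ a → 0 ≤ b → a + b = 1 →
      Ψ (a • x + b • y) ≤ (a : EReal) * Ψ x + (b : EReal) * Ψ y)
    (prox : ℝ → EuclideanSpace ℝ (Fin n) → EuclideanSpace ℝ (Fin n))
    (hprox : ∀ t : ℝ, 0 < t → ∀ x z : EuclideanSpace ℝ (Fin n),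
      Ψ (prox t x) + ((‖x - prox t x‖ ^ 2 / (2 * t) : ℝ) : EReal)
        ≤ Ψ z + ((‖x - z‖ ^ 2 / (2 * t) : ℝ) : EReal))
    (F : EuclideanSpace ℝ (Fin n) → EReal)
    (hF : ∀ x, F x = (f x : EReal) + Ψ x)
    (G : ℝ → EuclideanSpace ℝ (Fin n) → EuclideanSpace ℝ (Fin n))
    (hG : ∀ t x, G t x = t⁻¹ • (x - prox t (x - t • f' x)))
    (xstar : EuclideanSpace ℝ (Fin n)) (hxstar : ∀ w, F xstar ≤ F w)
    (z y : ℕ → EuclideanSpace ℝ (Fin n))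
    -- `z_k` lies on the affine line through `z̄_{k−1}` and `y_k` and satisfies
    -- the two sign conditions of the line search
    (hzline : ∀ k : ℕ, 1 ≤ k → ∃ s : ℝ,
      z k = (z (k - 1) - (1 / L) • G (1 / L) (z (k - 1)))
        + s • (y k - (z (k - 1) - (1 / L) • G (1 / L) (z (k - 1)))))
    (hzsign : ∀ k : ℕ, 1 ≤ k →
      0 ≤ ⟪G (1 / L) (z k), y k - z k⟫ ∧
      -⟪G (1 / L) (z k), (z (k - 1) - (1 / L) • G (1 / L) (z (k - 1))) - z k⟫ ≤ 0)
    (hyupd : ∀ k : ℕ, 1 ≤ k →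
      y (k + 1) = y k - (((k : ℝ) + 1) / (2 * L)) • G (1 / L) (z k)) :
    ∀ k : ℕ, 1 ≤ k →
      ((‖y (k + 1) - xstar‖ ^ 2 : ℝ) : EReal)
          + ((((k : ℝ) + 1) * ((k : ℝ) + 2) / (2 * L) : ℝ) : EReal)
            * (F (z k - (1 / L) • G (1 / L) (z k)) - F xstar)
        ≤ ((‖y k - xstar‖ ^ 2 : ℝ) : EReal)
          + (((k : ℝ) * ((k : ℝ) + 1) / (2 * L) : ℝ) : EReal)
            * (F (z (k - 1) - (1 / L) • G (1 / L) (z (k - 1))) - F xstar) :=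
  geometric_descent_convex_potential_general L hL f f' hfconvex hsmooth Ψ hproper hconvex prox hprox
    F hF G hG xstar hxstar z y hzsign hyupd
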